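/- For every fixed real symmetric positive definite d×d matrix A, the function B ↦ M(A, B) is continuous on the set of real symmetric positive definite d×d matrices. -/

import Mathlib

open Matrix

/-- Eigenspace of a `d × d` real matrix `A` for the (potential) eigenvalue `μ`. -/
noncomputable def eigSp {d : ℕ} (A : Matrix (Fin d) (Fin d) ℝ) (μ : ℝ) :
    Submodule ℝ (Fin d → ℝ) :=
  Module.End.eigenspace A.mulVecLin μ

/-- `A` is aligned with `B` if every eigenspace of `B` is contained in an eigenspace of `A`. -/
def IsAligned {d : ℕ} (A B : Matrix (Fin d) (Fin d) ℝ) : Prop :=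
  ∀ μ : ℝ, ∃ ν : ℝ, eigSp B μ ≤ eigSp A ν

/-- The misalignment `M(A, B)`: the infimum, over symmetric positive definite matrices `S`
aligned with `A`, of `(1/2) · tr(S⁻¹ B + B⁻¹ S) − d`. -/
noncomputable def misalignment {d : ℕ} (A B : Matrix (Fin d) (Fin d) ℝ) : ℝ :=
  sInf {m : ℝ | ∃ S : Matrix (Fin d) (Fin d) ℝ,
    S.PosDef ∧ IsAligned S A ∧ m = (1 / 2) * (S⁻¹ * B + B⁻¹ * S).trace - d}

/-!
Write `g B = M(A, B) + d`, the infimum over aligned `S` of `½ tr(S⁻¹ B + B⁻¹ S)`. Traces of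
products of positive semidefinite matrices are nonnegative, so the Loewner bounds `B' ≤ t B` and
`B'⁻¹ ≤ t B⁻¹` give `g B' ≤ t g B` term by term. Positive definiteness is an open condition among
symmetric matrices and inversion is continuous, so for every `t > 1` these bounds and their mirror
images hold for all positive definite `B'` near `B`; hence `t⁻¹ g B ≤ g B' ≤ t g B` there.
-/

open Filter Topology
open scoped MatrixOrder ComplexOrder

section

variable {n : Type*} [Fintype n]

theorem Matrix.PosSemidef.trace_mul_nonneg [DecidableEq n] {𝕜 : Type*} [RCLike 𝕜]
    {P Q : Matrix n n 𝕜} (hP : P.PosSemidef) (hQ : Q.PosSemidef) : 0 ≤ (P * Q).trace := by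
  have hR := (CFC.sqrt_nonneg P).posSemidef
  have hPQ : (P * Q).trace = (CFC.sqrt P * Q * CFC.sqrt P).trace := by
    conv_lhs => rw [← CFC.sqrt_mul_sqrt_self P hP.nonneg]
    rw [mul_assoc, trace_mul_comm]
  rw [hPQ]
  simpa only [hR.isHermitian.eq] using (hQ.conjTranspose_mul_mul_same (CFC.sqrt P)).trace_nonneg

theorem Matrix.PosDef.eventually_posDef {P : Matrix n n ℝ} (hP : P.PosDef) :
    ∀ᶠ Q in 𝓝[{Q | Q.IsHermitian}] P, Q.PosDef := by
  have hsphere : ∀ᶠ Q in 𝓝 P, ∀ u ∈ Metric.sphere (0 : n → ℝ) 1, 0 < u ⬝ᵥ Q *ᵥ u := by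
    refine (isCompact_sphere 0 1).eventually_forall_of_forall_eventually fun u hu => ?_
    have hquad : Continuous fun p : Matrix n n ℝ × (n → ℝ) => p.2 ⬝ᵥ p.1 *ᵥ p.2 := by fun_prop
    refine hquad.continuousAt.eventually (lt_mem_nhds ?_)
    simpa using hP.dotProduct_mulVec_pos (x := u) (ne_zero_of_mem_sphere one_ne_zero ⟨u, hu⟩)
  filter_upwards [self_mem_nhdsWithin, nhdsWithin_le_nhds hsphere] with Q hQ hpos
  refine .of_dotProduct_mulVec_pos hQ fun x hx => ?_
  have hx' : 0 < ‖x‖ := norm_pos_iff.2 hx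
  have hu : ‖x‖⁻¹ • x ∈ Metric.sphere (0 : n → ℝ) 1 := by
    simp [norm_smul, hx'.ne']
  have hu_pos := hpos _ hu
  rw [mulVec_smul, dotProduct_smul, smul_dotProduct, smul_eq_mul, smul_eq_mul] at hu_pos
  simpa using pos_of_mul_pos_right (pos_of_mul_pos_right hu_pos (by positivity)) (by positivity)

theorem Matrix.PosDef.eventually_le_smul_and_le_smul {P : Matrix n n ℝ} (hP : P.PosDef) {t : ℝ}
    (ht : 1 < t) :
    ∀ᶠ Q in 𝓝[{Q | Q.PosDef}] P, Q ≤ t • P ∧ P ≤ t • Q := by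
  have hgap : ((t - 1) • P).PosDef := hP.smul (sub_pos.2 ht)
  have hlim : Tendsto id (𝓝[{Q | Q.PosDef}] P) (𝓝 P) :=
    tendsto_nhdsWithin_of_tendsto_nhds tendsto_id
  have hherm : ∀ᶠ Q in 𝓝[{Q | Q.PosDef}] P, Q.IsHermitian :=
    eventually_nhdsWithin_of_forall fun Q hQ => hQ.isHermitian
  have above : ∀ᶠ Q in 𝓝[{Q | Q.PosDef}] P, (t • P - Q).PosDef := by
    refine (tendsto_nhdsWithin_iff.2 ⟨?_, ?_⟩).eventually hgap.eventually_posDef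
    · simpa [sub_smul] using tendsto_const_nhds.sub hlim
    · exact hherm.mono fun Q hQ => (hP.isHermitian.smul (.all t)).sub hQ
  have below : ∀ᶠ Q in 𝓝[{Q | Q.PosDef}] P, (t • Q - P).PosDef := by
    refine (tendsto_nhdsWithin_iff.2 ⟨?_, ?_⟩).eventually hgap.eventually_posDef
    · simpa [sub_smul] using (hlim.const_smul t).sub tendsto_const_nhds
    · exact hherm.mono fun Q hQ => (hQ.smul (.all t)).sub hP.isHermitian
  filter_upwards [above, below] with Q hQ hQ' using ⟨hQ.posSemidef, hQ'.posSemidef⟩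

theorem Matrix.tendsto_inv_nhdsWithin_posDef [DecidableEq n] {P : Matrix n n ℝ} (hP : P.PosDef) :
    Tendsto Inv.inv (𝓝[{Q | Q.PosDef}] P) (𝓝[{Q | Q.PosDef}] P⁻¹) := by
  refine tendsto_nhdsWithin_iff.2 ⟨?_, eventually_nhdsWithin_of_forall fun Q hQ => hQ.inv⟩
  refine (continuousAt_matrix_inv P ?_).tendsto.mono_left nhdsWithin_le_nhds
  rw [Ring.inverse_eq_inv']
  exact continuousAt_inv₀ hP.det_pos.ne'

theorem Matrix.trace_inv_mul_add_le_mul [DecidableEq n] {S B B' : Matrix n n ℝ} (hS : S.PosDef)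
    {t : ℝ} (h : B' ≤ t • B) (hinv : B'⁻¹ ≤ t • B⁻¹) :
    (S⁻¹ * B' + B'⁻¹ * S).trace ≤ t * (S⁻¹ * B + B⁻¹ * S).trace := by
  have h₁ := hS.inv.posSemidef.trace_mul_nonneg (le_iff.1 h)
  have h₂ := (le_iff.1 hinv).trace_mul_nonneg hS.posSemidef
  simp only [Matrix.mul_sub, Matrix.sub_mul, Matrix.mul_smul, Matrix.smul_mul, trace_sub,
    trace_smul, smul_eq_mul] at h₁ h₂
  simp only [trace_add]
  linarith

end

theorem Filter.tendsto_nhds_of_forall_eventually_le_mul {α : Type*} {l : Filter α} {f : α → ℝ}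
    {c : ℝ} (h : ∀ t > 1, ∀ᶠ x in l, f x ≤ t * c ∧ c ≤ t * f x) : Tendsto f l (𝓝 c) := by
  have hmul : Tendsto (fun t => t * c) (𝓝[>] 1) (𝓝 c) := by
    have hcont : ContinuousAt (fun t : ℝ => t * c) 1 := continuousAt_id.mul continuousAt_const
    simpa using hcont.tendsto.mono_left nhdsWithin_le_nhds
  have hdiv : Tendsto (fun t => c / t) (𝓝[>] 1) (𝓝 c) := by
    have hcont : ContinuousAt (fun t : ℝ => c / t) 1 :=
      continuousAt_const.div continuousAt_id one_ne_zero
    simpa using hcont.tendsto.mono_left nhdsWithin_le_nhds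
  refine tendsto_order.2 ⟨fun a ha => ?_, fun b hb => ?_⟩
  · obtain ⟨t, hat, ht⟩ := ((hdiv.eventually (lt_mem_nhds ha)).and self_mem_nhdsWithin).exists
    filter_upwards [h t ht] with x hx
    exact hat.trans_le ((div_le_iff₀' (by positivity)).2 hx.2)
  · obtain ⟨t, hbt, ht⟩ := ((hmul.eventually (gt_mem_nhds hb)).and self_mem_nhdsWithin).exists
    filter_upwards [h t ht] with x hx
    exact hx.1.trans_lt hbt

section Misalignment

variable {d : ℕ} {A B B' : Matrix (Fin d) (Fin d) ℝ}

theorem isAligned_one (A : Matrix (Fin d) (Fin d) ℝ) : IsAligned 1 A :=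
  fun _ => ⟨1, by simp [eigSp, Module.End.eigenspace_def, Module.End.one_eq_id]⟩

theorem misalignment_le (hB : B.PosDef) {S : Matrix (Fin d) (Fin d) ℝ} (hS : S.PosDef)
    (hSA : IsAligned S A) : misalignment A B ≤ (1 / 2) * (S⁻¹ * B + B⁻¹ * S).trace - d := by
  refine csInf_le ⟨-d, ?_⟩ ⟨S, hS, hSA, rfl⟩
  rintro _ ⟨S, hS, -, rfl⟩
  have h₁ := hS.inv.posSemidef.trace_mul_nonneg hB.posSemidef
  have h₂ := hB.inv.posSemidef.trace_mul_nonneg hS.posSemidef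
  rw [trace_add]
  linarith

theorem le_misalignment {c : ℝ}
    (h : ∀ S : Matrix (Fin d) (Fin d) ℝ, S.PosDef → IsAligned S A →
      c ≤ (1 / 2) * (S⁻¹ * B + B⁻¹ * S).trace - d) : c ≤ misalignment A B := by
  refine le_csInf ⟨_, 1, .one, isAligned_one A, rfl⟩ ?_
  rintro _ ⟨S, hS, hSA, rfl⟩
  exact h S hS hSA

theorem misalignment_add_le_mul (hB' : B'.PosDef) {t : ℝ} (ht : 0 < t) (h : B' ≤ t • B)
    (hinv : B'⁻¹ ≤ t • B⁻¹) : misalignment A B' + d ≤ t * (misalignment A B + d) := by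
  suffices (misalignment A B' + d) / t - d ≤ misalignment A B by
    rw [div_sub' ht.ne', div_le_iff₀' ht] at this
    linarith
  refine le_misalignment fun S hS hSA => ?_
  have hB'S := misalignment_le hB' hS hSA
  have htrace := trace_inv_mul_add_le_mul hS h hinv
  rw [sub_le_sub_iff_right, div_le_iff₀' ht]
  linarith

end Misalignment

theorem misalignment_continuousOn_general {d : ℕ} (A : Matrix (Fin d) (Fin d) ℝ) :
    ContinuousOn (fun B => misalignment A B)
      {B : Matrix (Fin d) (Fin d) ℝ | B.PosDef} := by
  intro B hB
  have hshift : Tendsto (fun B' => misalignment A B' + d) (𝓝[{B' | B'.PosDef}] B)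
      (𝓝 (misalignment A B + d)) := by
    refine tendsto_nhds_of_forall_eventually_le_mul fun t ht => ?_
    filter_upwards [self_mem_nhdsWithin, hB.eventually_le_smul_and_le_smul ht,
      (tendsto_inv_nhdsWithin_posDef hB).eventually (hB.inv.eventually_le_smul_and_le_smul ht)]
      with B' hB' ⟨hle, hge⟩ ⟨hle_inv, hge_inv⟩
    exact ⟨misalignment_add_le_mul hB' (by positivity) hle hle_inv,
      misalignment_add_le_mul hB (by positivity) hge hge_inv⟩
  have h := hshift.sub_const (d : ℝ)
  simp only [add_sub_cancel_right] at h
  exact h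

/-- For fixed positive definite `A`, the misalignment `B ↦ M(A, B)` is
continuous on the set of symmetric positive definite matrices. -/
theorem misalignment_continuousOn {d : ℕ} (A : Matrix (Fin d) (Fin d) ℝ) (hA : A.PosDef) :
    ContinuousOn (fun B => misalignment A B)
      {B : Matrix (Fin d) (Fin d) ℝ | B.PosDef} :=
  misalignment_continuousOn_general A
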